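/- Let S = MC({S_i}_{i∈I}, K) be the multicomposition of a composable family {S_i}_{i∈I} with interfaces H = {h_i}_{i∈I} and connection policy K complying with a connection model CM, and let s = (q⃗, w⃗) be a reachable configuration of S. If for every i ∈ I the local state q_{h_i} of the gateway for h_i is not one of the fresh intermediate gateway states in Q̂_{h_i}, then the projection s|_K is a reachable configuration of the communicating system K. -/

import Mathlib

/-!
Every gateway step either mirrors a step of its policy machine — the gateway input from
another interface is the policy's input, the gateway output to another interface is the
policy's output — or is invisible from `K`: it only moves a message over a channel inside
system `i` and leaves the policy state unchanged. Mapping each configuration of the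
multicomposition to the configuration of `K` it simulates therefore turns runs of
`MC({S_i}, K)` into runs of `K`, and on configurations without intermediate gateway states
this map is the projection `s|_K`.
-/

namespace CFSM

/-- Direction of a communication action: output (`!`) or input (`?`). -/
inductive Dir : Type where
  | out : Dir
  | inp : Dir
deriving DecidableEq

instance : Fintype Dir :=
  ⟨{Dir.out, Dir.inp}, fun x => by cases x <;> simp⟩

/-- An action `pq!a` (output) or `pq?a` (input) over participants `P` and messages `A`:
`snd` is the sender `p`, `rcv` the receiver `q`, `msg` the message `a`. -/
structure Act (P : Type) (A : Type) : Type where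
  snd : P
  rcv : P
  dir : Dir
  msg : A

instance {P A : Type} [Finite P] [Finite A] : Finite (Act P A) :=
  Finite.of_injective (fun l => (l.snd, l.rcv, l.dir, l.msg))
    (fun a b h => by
      cases a; cases b
      simp only [Prod.mk.injEq] at h
      obtain ⟨h1, h2, h3, h4⟩ := h
      subst h1; subst h2; subst h3; subst h4; rfl)

/-- The subject of an action: the sender of an output, the receiver of an input. -/
def Act.subject {P A : Type} (l : Act P A) : P :=
  match l.dir with
  | .out => l.snd
  | .inp => l.rcv

/-- A communicating system over participants `P` and messages `A`:
one machine (state type, initial state and transition relation) per participant. -/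
structure CS (P : Type) (A : Type) : Type 1 where
  St : P → Type
  init : ∀ p, St p
  delta : ∀ p, Set (St p × Act P A × St p)

/-- All actions of the machine of participant `p` have subject `p`
(the name of the machine) and distinct endpoints. -/
def CS.WellFormed {P A : Type} (S : CS P A) : Prop :=
  ∀ p t, t ∈ S.delta p → ((t.2.1 : Act P A).subject = p ∧ t.2.1.snd ≠ t.2.1.rcv)

/-- A configuration: a local state for each machine and a FIFO buffer
for each ordered pair of participants. -/
structure Config {P A : Type} (S : CS P A) : Type where
  st : ∀ p, S.St p
  ch : P → P → List A

/-- The initial configuration: all machines in their initial state, all channels empty. -/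
def CS.initConfig {P A : Type} (S : CS P A) : Config S :=
  ⟨S.init, fun _ _ => []⟩

/-- The labelled transition relation between configurations. -/
def StepL {P A : Type} (S : CS P A) (c : Config S) (l : Act P A) (c' : Config S) : Prop :=
  match l.dir with
  | .out =>
      (c.st l.snd, l, c'.st l.snd) ∈ S.delta l.snd ∧
      (∀ p, p ≠ l.snd → c'.st p = c.st p) ∧
      c'.ch l.snd l.rcv = c.ch l.snd l.rcv ++ [l.msg] ∧
      (∀ p q, (p, q) ≠ (l.snd, l.rcv) → c'.ch p q = c.ch p q)
  | .inp =>
      (c.st l.rcv, l, c'.st l.rcv) ∈ S.delta l.rcv ∧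
      (∀ p, p ≠ l.rcv → c'.st p = c.st p) ∧
      c.ch l.snd l.rcv = l.msg :: c'.ch l.snd l.rcv ∧
      (∀ p q, (p, q) ≠ (l.snd, l.rcv) → c'.ch p q = c.ch p q)

/-- Unlabelled transition relation. -/
def Step {P A : Type} (S : CS P A) (c c' : Config S) : Prop :=
  ∃ l, StepL S c l c'

/-- Reachability between configurations. -/
def Reach {P A : Type} (S : CS P A) : Config S → Config S → Prop :=
  Relation.ReflTransGen (Step S)

/-- The set of configurations reachable from the initial configuration. -/
def RC {P A : Type} (S : CS P A) : Set (Config S) :=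
  {c | Reach S S.initConfig c}

/-- A local state is final if it has no outgoing transition. -/
def FinalSt {Q P A : Type} (δ : Set (Q × Act P A × Q)) (q : Q) : Prop :=
  ∀ l q', (q, l, q') ∉ δ

/-- A local state is receiving if it is not final and all its outgoing
transitions are labelled with input actions. -/
def ReceivingSt {Q P A : Type} (δ : Set (Q × Act P A × Q)) (q : Q) : Prop :=
  (∃ l q', (q, l, q') ∈ δ) ∧ ∀ l q', (q, l, q') ∈ δ → (l : Act P A).dir = Dir.inp

/-- A local state is mixed if it has at least one outgoing output-labelled
transition and at least one outgoing input-labelled transition. -/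
def MixedSt {Q P A : Type} (δ : Set (Q × Act P A × Q)) (q : Q) : Prop :=
  (∃ l q', (q, l, q') ∈ δ ∧ (l : Act P A).dir = Dir.out) ∧
  (∃ l q', (q, l, q') ∈ δ ∧ (l : Act P A).dir = Dir.inp)

/-- A machine has no mixed states. -/
def NoMixed {Q P A : Type} (δ : Set (Q × Act P A × Q)) : Prop :=
  ∀ q, ¬ MixedSt δ q

/-- Deadlock configuration: all channels empty but all machines in receiving states. -/
def DeadlockConfig {P A : Type} (S : CS P A) (c : Config S) : Prop :=
  (∀ p q, c.ch p q = []) ∧ ∀ p, ReceivingSt (S.delta p) (c.st p)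

def DeadlockFree {P A : Type} (S : CS P A) : Prop :=
  ∀ c ∈ RC S, ¬ DeadlockConfig S c

/-- Orphan-message configuration: all machines final but some channel nonempty. -/
def OrphanConfig {P A : Type} (S : CS P A) (c : Config S) : Prop :=
  (∀ p, FinalSt (S.delta p) (c.st p)) ∧ ∃ p q, c.ch p q ≠ []

def OrphanFree {P A : Type} (S : CS P A) : Prop :=
  ∀ c ∈ RC S, ¬ OrphanConfig S c

/-- Unspecified reception configuration: some machine `r` is in a receiving state and,
for every input transition of `r`, the corresponding channel is nonempty with a
first element different from the expected message. -/
def URConfig {P A : Type} (S : CS P A) (c : Config S) : Prop :=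
  ∃ r, ReceivingSt (S.delta r) (c.st r) ∧
    ∀ s a q', (c.st r, Act.mk s r Dir.inp a, q') ∈ S.delta r →
      (c.ch s r ≠ [] ∧ ¬ ∃ w, c.ch s r = a :: w)

def ReceptionErrorFree {P A : Type} (S : CS P A) : Prop :=
  ∀ c ∈ RC S, ¬ URConfig S c

/-- Progress: every reachable configuration has an outgoing transition or all
machines are in final states. -/
def ProgressProp {P A : Type} (S : CS P A) : Prop :=
  ∀ c ∈ RC S, (∃ c', Step S c c') ∨ ∀ p, FinalSt (S.delta p) (c.st p)

/-- `p`-lock configuration: `p` is in a receiving state and never occurs as the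
subject of an action in any transition sequence from `c`. -/
def PLockConfig {P A : Type} (S : CS P A) (c : Config S) (p : P) : Prop :=
  ReceivingSt (S.delta p) (c.st p) ∧
  ∀ c1 l c2, Reach S c c1 → StepL S c1 l c2 → l.subject ≠ p

def LockFree {P A : Type} (S : CS P A) : Prop :=
  ∀ c ∈ RC S, ∀ p, ¬ PLockConfig S c p

section Composition

variable {I : Type} {P : I → Type} {A : Type}

/-- Messages occurring in input actions of the machine of `p`. -/
def inMsgs {Pp A : Type} (S : CS Pp A) (p : Pp) : Set A :=
  {a | ∃ q s q', (q, Act.mk s p Dir.inp a, q') ∈ S.delta p}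

/-- Messages occurring in output actions of the machine of `p`. -/
def outMsgs {Pp A : Type} (S : CS Pp A) (p : Pp) : Set A :=
  {a | ∃ q r q', (q, Act.mk p r Dir.out a, q') ∈ S.delta p}

/-- `CM` is a connection model for the interfaces `hh i` of the family `S`
(the interface `h_i` is represented by its index `i`). -/
def IsConnModel (S : ∀ i, CS (P i) A) (hh : ∀ i, P i) (CM : Set (I × A × I)) : Prop :=
  ∀ i a,
    (a ∈ inMsgs (S i) (hh i) →
      ∃ j, j ≠ i ∧ a ∈ outMsgs (S j) (hh j) ∧ (i, a, j) ∈ CM) ∧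
    (a ∈ outMsgs (S i) (hh i) →
      ∃ j, j ≠ i ∧ a ∈ inMsgs (S j) (hh j) ∧ (j, a, i) ∈ CM)

/-- `CM` is a strong connection model: additionally the connecting partner is unique. -/
def IsStrongConnModel (S : ∀ i, CS (P i) A) (hh : ∀ i, P i) (CM : Set (I × A × I)) : Prop :=
  IsConnModel S hh CM ∧
  ∀ i a,
    (a ∈ inMsgs (S i) (hh i) → ∃! j, (i, a, j) ∈ CM) ∧
    (a ∈ outMsgs (S i) (hh i) → ∃! j, (j, a, i) ∈ CM)

/-- Conditions (*) and (**) for a candidate transition relation `d` of the local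
connection policy of interface `hh i` (the name `k_i` is represented by `i`). -/
def PolicySat (S : ∀ i, CS (P i) A) (hh : ∀ i, P i) (CM : Set (I × A × I)) (i : I)
    (d : Set ((S i).St (hh i) × Act I A × (S i).St (hh i))) : Prop :=
  (∀ q r a q', (q, Act.mk r (hh i) Dir.inp a, q') ∈ (S i).delta (hh i) →
      ∃ j, j ≠ i ∧ (i, a, j) ∈ CM ∧ (q, Act.mk i j Dir.out a, q') ∈ d) ∧
  (∀ q r a q', (q, Act.mk (hh i) r Dir.out a, q') ∈ (S i).delta (hh i) →
      ∃ j, j ≠ i ∧ (j, a, i) ∈ CM ∧ (q, Act.mk j i Dir.inp a, q') ∈ d)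

/-- `d` belongs to the local connection policy set `IS(M_{h_i}, CM)`:
it is a minimal relation satisfying (*) and (**).  (The states `q̇` of the
policy machine are identified with the states `q` of `M_{h_i}`.) -/
def InIS (S : ∀ i, CS (P i) A) (hh : ∀ i, P i) (CM : Set (I × A × I)) (i : I)
    (d : Set ((S i).St (hh i) × Act I A × (S i).St (hh i))) : Prop :=
  PolicySat S hh CM i d ∧ ∀ d', d' ⊆ d → PolicySat S hh CM i d' → d' = d

/-- The communicating system (over the participant type `I` of names `k_i`)
determined by the family of transition relations `Kd` of a connection policy. -/
def policyCS (S : ∀ i, CS (P i) A) (hh : ∀ i, P i)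
    (Kd : ∀ i, Set ((S i).St (hh i) × Act I A × (S i).St (hh i))) : CS I A where
  St := fun i => (S i).St (hh i)
  init := fun i => (S i).init (hh i)
  delta := Kd

/-- `Kd` is a connection policy for the interfaces `hh` complying with `CM`. -/
def IsConnPolicy (S : ∀ i, CS (P i) A) (hh : ∀ i, P i) (CM : Set (I × A × I))
    (Kd : ∀ i, Set ((S i).St (hh i) × Act I A × (S i).St (hh i))) : Prop :=
  ∀ i, InIS S hh CM i (Kd i)

/-- States of the gateway for interface `hh i`: the original states plus one
fresh state per transition of `M_{h_i}`. -/
abbrev GWState (S : ∀ i, CS (P i) A) (hh : ∀ i, P i) (i : I) : Type :=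
  (S i).St (hh i) ⊕ ((S i).St (hh i) × Act (P i) A × (S i).St (hh i))

/-- Lifting of a local action of system `i` to the composed participant type. -/
def liftAct (i : I) (l : Act (P i) A) : Act ((j : I) × P j) A :=
  Act.mk ⟨i, l.snd⟩ ⟨i, l.rcv⟩ l.dir l.msg

/-- Transition relation of the gateway `M_{h_i} ⟲ M_{k_i}`. -/
def GWdelta (S : ∀ i, CS (P i) A) (hh : ∀ i, P i)
    (Kd : ∀ i, Set ((S i).St (hh i) × Act I A × (S i).St (hh i))) (i : I) :
    Set (GWState S hh i × Act ((j : I) × P j) A × GWState S hh i) :=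
  {x | ∃ q a q',
    (∃ s r, (q, Act.mk (hh i) s Dir.out a, q') ∈ (S i).delta (hh i) ∧
        (q, Act.mk r i Dir.inp a, q') ∈ Kd i ∧
        (x = (Sum.inl q, Act.mk ⟨r, hh r⟩ ⟨i, hh i⟩ Dir.inp a,
              Sum.inr (q, Act.mk (hh i) s Dir.out a, q')) ∨
         x = (Sum.inr (q, Act.mk (hh i) s Dir.out a, q'),
              Act.mk ⟨i, hh i⟩ ⟨i, s⟩ Dir.out a, Sum.inl q'))) ∨
    (∃ s r, (q, Act.mk s (hh i) Dir.inp a, q') ∈ (S i).delta (hh i) ∧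
        (q, Act.mk i r Dir.out a, q') ∈ Kd i ∧
        (x = (Sum.inl q, Act.mk ⟨i, s⟩ ⟨i, hh i⟩ Dir.inp a,
              Sum.inr (q, Act.mk s (hh i) Dir.inp a, q')) ∨
         x = (Sum.inr (q, Act.mk s (hh i) Dir.inp a, q'),
              Act.mk ⟨i, hh i⟩ ⟨r, hh r⟩ Dir.out a, Sum.inl q')))}

open Classical in
/-- State type of the machine of participant `⟨i, p⟩` in the multicomposition:
the gateway state type if `p` is the interface of system `i`, the original
state type otherwise. -/
noncomputable def MCSt (S : ∀ i, CS (P i) A) (hh : ∀ i, P i) (x : (i : I) × P i) : Type :=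
  if x.2 = hh x.1 then GWState S hh x.1 else (S x.1).St x.2

/-- The multicomposition `MC({S_i}, K)`: all machines of the single systems,
with the machine of each interface `hh i` replaced by its gateway. -/
noncomputable def MC (S : ∀ i, CS (P i) A) (hh : ∀ i, P i)
    (Kd : ∀ i, Set ((S i).St (hh i) × Act I A × (S i).St (hh i))) :
    CS ((i : I) × P i) A where
  St := MCSt S hh
  init := fun x => by
    by_cases hp : x.2 = hh x.1
    · have h : MCSt S hh x = GWState S hh x.1 := by simp [MCSt, hp]
      rw [h]; exact Sum.inl ((S x.1).init (hh x.1))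
    · have h : MCSt S hh x = (S x.1).St x.2 := by simp [MCSt, hp]
      rw [h]; exact (S x.1).init x.2
  delta := fun x => by
    by_cases hp : x.2 = hh x.1
    · have h : MCSt S hh x = GWState S hh x.1 := by simp [MCSt, hp]
      rw [h]; exact GWdelta S hh Kd x.1
    · have h : MCSt S hh x = (S x.1).St x.2 := by simp [MCSt, hp]
      rw [h]
      exact {t | ∃ q l q', (q, l, q') ∈ (S x.1).delta x.2 ∧ t = (q, liftAct x.1 l, q')}

/-- The state of the gateway of interface `hh i` in a configuration of the
multicomposition, as an element of `GWState`. -/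
noncomputable def toGW (S : ∀ i, CS (P i) A) (hh : ∀ i, P i) (i : I)
    (x : MCSt S hh ⟨i, hh i⟩) : GWState S hh i :=
  cast (by simp [MCSt]) x

/-- The state of a non-interface participant in a configuration of the
multicomposition, as an element of its original state type. -/
noncomputable def toLoc (S : ∀ i, CS (P i) A) (hh : ∀ i, P i) {i : I} {p : P i}
    (hp : p ≠ hh i) (x : MCSt S hh ⟨i, p⟩) : (S i).St p :=
  cast (by simp [MCSt, hp]) x

/-- Projection of a configuration of the multicomposition to system `S i`,
assuming the gateway state of `hh i` is not a fresh intermediate state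
(i.e. it is of the form `Sum.inl q`). -/
noncomputable def projSys (S : ∀ i, CS (P i) A) (hh : ∀ i, P i)
    (Kd : ∀ i, Set ((S i).St (hh i) × Act I A × (S i).St (hh i)))
    (i : I) (s : Config (MC S hh Kd))
    (hq : ∃ q, toGW S hh i (s.st ⟨i, hh i⟩) = Sum.inl q) : Config (S i) where
  st := fun p => by
    by_cases hp : p = hh i
    · rw [hp]; exact hq.choose
    · exact toLoc S hh hp (s.st ⟨i, p⟩)
  ch := fun p q => s.ch ⟨i, p⟩ ⟨i, q⟩

/-- Projection of a configuration of the multicomposition to the connection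
policy `K`, assuming no gateway is in a fresh intermediate state. -/
noncomputable def projPolicy (S : ∀ i, CS (P i) A) (hh : ∀ i, P i)
    (Kd : ∀ i, Set ((S i).St (hh i) × Act I A × (S i).St (hh i)))
    (s : Config (MC S hh Kd))
    (hq : ∀ i, ∃ q, toGW S hh i (s.st ⟨i, hh i⟩) = Sum.inl q) :
    Config (policyCS S hh Kd) where
  st := fun i => (hq i).choose
  ch := fun i j => s.ch ⟨i, hh i⟩ ⟨j, hh j⟩

end Composition

end CFSM

namespace CFSM

attribute [ext] Config

section Frame

variable {P A : Type} {S : CS P A} {c c' : Config S} {l : Act P A}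

theorem StepL.mem_delta (h : StepL S c l c') {x : P} (hx : l.subject = x) :
    (c.st x, l, c'.st x) ∈ S.delta x := by
  subst hx
  obtain ⟨snd, rcv, d, a⟩ := l
  cases d
  exacts [h.1, h.1]

theorem StepL.st_eq_of_ne (h : StepL S c l c') {p : P} (hp : p ≠ l.subject) :
    c'.st p = c.st p := by
  obtain ⟨snd, rcv, d, a⟩ := l
  cases d
  exacts [h.2.1 p hp, h.2.1 p hp]

theorem StepL.ch_eq_of_ne (h : StepL S c l c') {p q : P} (hpq : (p, q) ≠ (l.snd, l.rcv)) :
    c'.ch p q = c.ch p q := by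
  obtain ⟨snd, rcv, d, a⟩ := l
  cases d
  exacts [h.2.2.2 p q hpq, h.2.2.2 p q hpq]

theorem Act.subject_eq_snd_or_rcv (l : Act P A) : l.subject = l.snd ∨ l.subject = l.rcv := by
  obtain ⟨snd, rcv, d, a⟩ := l
  cases d
  exacts [Or.inl rfl, Or.inr rfl]

end Frame

theorem mem_cast_set_iff {α β L : Type} (e : α = β)
    (h : Set (α × L × α) = Set (β × L × β)) (d : Set (α × L × α)) (x y : β) (l : L) :
    (x, l, y) ∈ cast h d ↔ (cast e.symm x, l, cast e.symm y) ∈ d := by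
  subst e
  rfl

section Simulation

variable {I : Type} {P : I → Type} {A : Type}

def IsInterface (hh : ∀ i, P i) (x : (i : I) × P i) : Prop :=
  x.2 = hh x.1

theorem isInterface_mk (hh : ∀ i, P i) (i : I) : IsInterface hh ⟨i, hh i⟩ :=
  rfl

theorem isInterface_mk_iff (hh : ∀ i, P i) {i : I} {p : P i} :
    IsInterface hh ⟨i, p⟩ ↔ p = hh i :=
  Iff.rfl

def interfaceAct (hh : ∀ i, P i) (l : Act I A) : Act ((i : I) × P i) A :=
  Act.mk ⟨l.snd, hh l.snd⟩ ⟨l.rcv, hh l.rcv⟩ l.dir l.msg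

theorem interfaceAct_subject (hh : ∀ i, P i) (l : Act I A) :
    (interfaceAct hh l).subject = ⟨l.subject, hh l.subject⟩ := by
  obtain ⟨snd, rcv, d, a⟩ := l
  cases d <;> rfl

variable (S : ∀ i, CS (P i) A) (hh : ∀ i, P i)
  (Kd : ∀ i, Set ((S i).St (hh i) × Act I A × (S i).St (hh i)))

/-- An intermediate gateway state `q^t` lies after the policy's input when `t` is an output of
`h_i`, and before the policy's output when `t` is an input of `h_i`. -/
def policyState (i : I) : GWState S hh i → (S i).St (hh i)
  | Sum.inl q => q
  | Sum.inr (q, l, q') => match l.dir with | Dir.out => q' | Dir.inp => q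

noncomputable def policyConfig (c : Config (MC S hh Kd)) : Config (policyCS S hh Kd) where
  st i := policyState S hh i (toGW S hh i (c.st ⟨i, hh i⟩))
  ch i j := c.ch ⟨i, hh i⟩ ⟨j, hh j⟩

theorem toGW_init (i : I) :
    toGW S hh i ((MC S hh Kd).init ⟨i, hh i⟩) = Sum.inl ((S i).init (hh i)) := by
  simp only [MC, MCSt, toGW, dite_true]
  exact cast_cast _ _ _

theorem policyConfig_initConfig :
    policyConfig S hh Kd (MC S hh Kd).initConfig = (policyCS S hh Kd).initConfig := by
  ext i
  · change policyState S hh i (toGW S hh i ((MC S hh Kd).init ⟨i, hh i⟩)) = _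
    rw [toGW_init]
    rfl
  · rfl

theorem mem_MC_delta_interface_iff (i : I) (g g' : MCSt S hh ⟨i, hh i⟩)
    (l : Act ((j : I) × P j) A) :
    (g, l, g') ∈ (MC S hh Kd).delta ⟨i, hh i⟩ ↔
      (toGW S hh i g, l, toGW S hh i g') ∈ GWdelta S hh Kd i := by
  simp only [MC, MCSt, toGW, dite_true]
  exact mem_cast_set_iff (show GWState S hh i = MCSt S hh ⟨i, hh i⟩ by simp [MCSt]) _ _ _ _ _

theorem projPolicy_eq_policyConfig (s : Config (MC S hh Kd))
    (hq : ∀ i, ∃ q, toGW S hh i (s.st ⟨i, hh i⟩) = Sum.inl q) :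
    projPolicy S hh Kd s hq = policyConfig S hh Kd s := by
  ext i
  · exact (congrArg (policyState S hh i) (hq i).choose_spec).symm
  · rfl

theorem GWdelta_cases (hwf : ∀ i, (S i).WellFormed) {i : I} {g g' : GWState S hh i}
    {l : Act ((j : I) × P j) A} (h : (g, l, g') ∈ GWdelta S hh Kd i) :
    (policyState S hh i g' = policyState S hh i g ∧
        ¬ (IsInterface hh l.snd ∧ IsInterface hh l.rcv)) ∨
      ∃ l' : Act I A, l = interfaceAct hh l' ∧ l'.subject = i ∧
        (policyState S hh i g, l', policyState S hh i g') ∈ Kd i := by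
  obtain ⟨q, a, q', ⟨s, r, hM, hK, he | he⟩ | ⟨s, r, hM, hK, he | he⟩⟩ := h <;>
    simp only [Prod.mk.injEq] at he <;> obtain ⟨rfl, rfl, rfl⟩ := he
  · exact Or.inr ⟨Act.mk r i Dir.inp a, rfl, rfl, hK⟩
  · have hs : hh i ≠ s := (hwf i _ _ hM).2
    exact Or.inl ⟨rfl, fun ⟨_, hrcv⟩ => hs ((isInterface_mk_iff hh).1 hrcv).symm⟩
  · have hs : s ≠ hh i := (hwf i _ _ hM).2
    exact Or.inl ⟨rfl, fun ⟨hsnd, _⟩ => hs ((isInterface_mk_iff hh).1 hsnd)⟩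
  · exact Or.inr ⟨Act.mk i r Dir.out a, rfl, rfl, hK⟩

variable {S hh Kd} {c c' : Config (MC S hh Kd)}

theorem policyConfig_eq_of_stepL {l : Act ((j : I) × P j) A} (h : StepL (MC S hh Kd) c l c')
    (hst : ∀ i, l.subject = ⟨i, hh i⟩ →
      policyState S hh i (toGW S hh i (c'.st ⟨i, hh i⟩)) =
        policyState S hh i (toGW S hh i (c.st ⟨i, hh i⟩)))
    (hch : ¬ (IsInterface hh l.snd ∧ IsInterface hh l.rcv)) :
    policyConfig S hh Kd c' = policyConfig S hh Kd c := by
  refine Config.ext (funext fun i => ?_) (funext fun i => funext fun j => ?_)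
  · by_cases hi : l.subject = ⟨i, hh i⟩
    · exact hst i hi
    · exact congrArg (fun g => policyState S hh i (toGW S hh i g)) (h.st_eq_of_ne (Ne.symm hi))
  · refine h.ch_eq_of_ne fun hjk => hch ?_
    rw [Prod.mk.injEq] at hjk
    rw [← hjk.1, ← hjk.2]
    exact ⟨isInterface_mk hh i, isInterface_mk hh j⟩

theorem stepL_policyConfig {l : Act I A} (h : StepL (MC S hh Kd) c (interfaceAct hh l) c')
    (hK : ((policyConfig S hh Kd c).st l.subject, l,
      (policyConfig S hh Kd c').st l.subject) ∈ Kd l.subject) :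
    StepL (policyCS S hh Kd) (policyConfig S hh Kd c) l (policyConfig S hh Kd c') := by
  have hst (j : I) (hj : j ≠ l.subject) :
      (policyConfig S hh Kd c').st j = (policyConfig S hh Kd c).st j := by
    refine congrArg (fun g => policyState S hh j (toGW S hh j g)) (h.st_eq_of_ne ?_)
    rw [interfaceAct_subject]
    exact fun e => hj (congrArg Sigma.fst e)
  have hch (j k : I) (hjk : (j, k) ≠ (l.snd, l.rcv)) :
      (policyConfig S hh Kd c').ch j k = (policyConfig S hh Kd c).ch j k :=
    h.ch_eq_of_ne fun e => hjk (by
      simp only [interfaceAct, Prod.mk.injEq] at e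
      exact Prod.ext (congrArg Sigma.fst e.1) (congrArg Sigma.fst e.2))
  obtain ⟨snd, rcv, d, a⟩ := l
  cases d
  exacts [⟨hK, hst, h.2.2.1, hch⟩, ⟨hK, hst, h.2.2.1, hch⟩]

theorem step_policyConfig (hwf : ∀ i, (S i).WellFormed) (h : Step (MC S hh Kd) c c') :
    Relation.ReflGen (Step (policyCS S hh Kd))
      (policyConfig S hh Kd c) (policyConfig S hh Kd c') := by
  obtain ⟨l, hl⟩ := h
  obtain ⟨⟨i, p⟩, hsub⟩ : ∃ x, l.subject = x := ⟨_, rfl⟩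
  by_cases hp : IsInterface hh ⟨i, p⟩
  · rw [isInterface_mk_iff] at hp
    subst hp
    have hgw := (mem_MC_delta_interface_iff S hh Kd i _ _ l).1 (hl.mem_delta hsub)
    rcases GWdelta_cases S hh Kd hwf hgw with ⟨hst, hch⟩ | ⟨l', rfl, rfl, hK⟩
    · refine policyConfig_eq_of_stepL hl (fun j hj => ?_) hch ▸ .refl
      obtain rfl : j = i := congrArg Sigma.fst (hj.symm.trans hsub)
      exact hst
    · exact .single ⟨l', stepL_policyConfig hl hK⟩
  · refine policyConfig_eq_of_stepL hl (fun j hj => ?_) (fun ⟨hsnd, hrcv⟩ => ?_) ▸ .refl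
    · exact (hp (hsub.symm.trans hj ▸ isInterface_mk hh j)).elim
    · rcases l.subject_eq_snd_or_rcv with e | e <;> rw [hsub] at e
      exacts [hp (e ▸ hsnd), hp (e ▸ hrcv)]

theorem reach_policyConfig (hwf : ∀ i, (S i).WellFormed) (h : Reach (MC S hh Kd) c c') :
    Reach (policyCS S hh Kd) (policyConfig S hh Kd c) (policyConfig S hh Kd c') :=
  Relation.ReflTransGen.lift' (policyConfig S hh Kd)
    (fun _ _ hstep => (step_policyConfig hwf hstep).to_reflTransGen) c c' h

end Simulation

end CFSM

open CFSM in
theorem projPolicy_reachable_general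
    {I : Type} {P : I → Type} {A : Type}
    (S : ∀ i, CS (P i) A)
    (hwf : ∀ i, (S i).WellFormed)
    (hh : ∀ i, P i)
    (Kd : ∀ i, Set ((S i).St (hh i) × Act I A × (S i).St (hh i)))
    (s : Config (MC S hh Kd)) (hs : s ∈ RC (MC S hh Kd))
    (hq : ∀ i, ∃ q, toGW S hh i (s.st ⟨i, hh i⟩) = Sum.inl q) :
    projPolicy S hh Kd s hq ∈ RC (policyCS S hh Kd) := by
  rw [projPolicy_eq_policyConfig]
  have hreach := reach_policyConfig hwf hs
  rwa [policyConfig_initConfig] at hreach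

open CFSM in
/-- if in a reachable configuration of the multicomposition no gateway is
in a fresh intermediate state, then the projection to the connection policy `K` is
reachable in `K`. -/
theorem projPolicy_reachable
    {I : Type} [Finite I] {P : I → Type} [∀ i, Finite (P i)] {A : Type} [Finite A]
    (S : ∀ i, CS (P i) A)
    (hfin : ∀ i p, Finite ((S i).St p))
    (hwf : ∀ i, (S i).WellFormed)
    (hh : ∀ i, P i)
    (CM : Set (I × A × I)) (hCM : IsConnModel S hh CM)
    (Kd : ∀ i, Set ((S i).St (hh i) × Act I A × (S i).St (hh i)))
    (hK : IsConnPolicy S hh CM Kd)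
    (s : Config (MC S hh Kd)) (hs : s ∈ RC (MC S hh Kd))
    (hq : ∀ i, ∃ q, toGW S hh i (s.st ⟨i, hh i⟩) = Sum.inl q) :
    projPolicy S hh Kd s hq ∈ RC (policyCS S hh Kd) :=
  projPolicy_reachable_general S hwf hh Kd s hs hq
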